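/- Every non-trivial welded knot K satisfies c(K) ≥ 3; equivalently, every Gauss code with at most two chords represents the trivial welded knot. -/

import Mathlib

/-!
Gauss codes for welded knots.

A Gauss code is a cyclic word in which each chord label occurs exactly twice,
once as a tail (`isHead = false`) and once as a head (`isHead = true`), both
occurrences carrying the common sign of the chord.  We represent the cyclic
word by a linear list of entries, working up to rotation (`List.rotate`) and
injective relabelling of the chords.
-/

/-- An endpoint of a chord: `(chord label, isHead, sign)`, where `isHead = false`
means a tail (over-passing) endpoint and `isHead = true` a head (under-passing)
endpoint, and the sign `true`/`false` stands for `+1`/`-1`. -/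
abbrev GEntry : Type := ℕ × Bool × Bool

/-- A (linear representative of a cyclic) word of endpoints. -/
abbrev GWord : Type := List GEntry

/-- The set of chord labels occurring in a word. -/
def chordSet (w : GWord) : Set ℕ := {a | ∃ e ∈ w, e.1 = a}

/-- `w` is a Gauss code: every chord label that occurs in `w` occurs exactly
twice, once as a tail and once as a head, with a common sign. -/
def IsGaussCode (w : GWord) : Prop :=
  ∀ a ∈ chordSet w,
    w.countP (fun e => e.1 == a) = 2 ∧
    ∃ s : Bool, (a, false, s) ∈ w ∧ (a, true, s) ∈ w

/-- The crossing change at the set `S` of chords: at every chord of `S`, the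
tail and head markings of its two occurrences are exchanged and its sign is
reversed. -/
def crossingChange (S : Finset ℕ) (w : GWord) : GWord :=
  w.map fun e => if e.1 ∈ S then (e.1, !e.2.1, !e.2.2) else e

/-- Deletion of the chord `a` (both of its endpoints) from the word. -/
def deleteChord (a : ℕ) (w : GWord) : GWord :=
  w.filter fun e => e.1 != a

/-- Equality of words up to cyclic permutation. -/
def RotEq (w w' : GWord) : Prop := ∃ n : ℕ, w' = w.rotate n

/-- Renaming the chords of a word by `f`. -/
def relabelWord (f : ℕ → ℕ) (w : GWord) : GWord := w.map fun e => (f e.1, e.2)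

/-- Equality of words up to cyclic permutation and (injective) renaming of
the chords. -/
def CyclicRename (w w' : GWord) : Prop :=
  ∃ (n : ℕ) (f : ℕ → ℕ), Function.Injective f ∧ w' = relabelWord f (w.rotate n)

/-- Raw C1 move (deleting direction): deletion of a chord whose two endpoints
occupy adjacent positions; the inserting direction is the converse relation. -/
def C1delRaw (u v : GWord) : Prop :=
  ∃ (x y : GWord) (a : ℕ) (h s : Bool),
    (∀ e ∈ x ++ y, e.1 ≠ a) ∧
    u = x ++ (a, h, s) :: (a, !h, s) :: y ∧
    v = x ++ y

/-- Raw W move: interchange of two adjacent endpoints that are both tails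
(of any two chords, regardless of signs). -/
def WRaw (u v : GWord) : Prop :=
  ∃ (x y : GWord) (a b : ℕ) (s t : Bool),
    u = x ++ (a, false, s) :: (b, false, t) :: y ∧
    v = x ++ (b, false, t) :: (a, false, s) :: y

/-- Raw C2 move (deleting direction): deletion of a pair of chords of opposite
signs whose two tails occupy adjacent positions and whose two heads occupy
adjacent positions. -/
def C2delRaw (u v : GWord) : Prop :=
  ∃ (x y z : GWord) (a b : ℕ) (s : Bool),
    a ≠ b ∧
    (∀ e ∈ x ++ y ++ z, e.1 ≠ a ∧ e.1 ≠ b) ∧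
    (u = x ++ (a, false, s) :: (b, false, !s) :: (y ++ (a, true, s) :: (b, true, !s) :: z) ∨
     u = x ++ (a, false, s) :: (b, false, !s) :: (y ++ (b, true, !s) :: (a, true, s) :: z)) ∧
    v = x ++ y ++ z

/-- Raw C3 move: the Gauss-code translation of the planar Reidemeister move of
type 3.  Three strands `A`, `B`, `C` (modelled on the lines `y = -1`, `y = x`,
`y = -x` and their directions `(1,0)`, `(1,1)`, `(-1,1)`, possibly reversed
according to `dA`, `dB`, `dC`) meet pairwise in the chords `a = AB`, `b = AC`,
`c = BC`; `oAB`, `oAC`, `oBC` record which strand passes over in each pair and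
must come from a linear height order.  The six endpoints form three adjacent
pairs, one on each strand, and the move exchanges the order within each pair;
the head/tail pattern is determined by the heights and the signs by the heights
and the directions, as in a planar diagram. -/
def C3Raw (u v : GWord) : Prop :=
  ∃ (x y z t : GWord) (a b c : ℕ) (oAB oAC oBC dA dB dC swap : Bool),
    a ≠ b ∧ a ≠ c ∧ b ≠ c ∧
    (oAB = oBC → oAC = oAB) ∧
    (let sa : Bool := (dA == dB) == oAB
     let sb : Bool := (dA == dC) == oAC
     let sc : Bool := (dB == dC) == oBC
     let PA : GWord :=
       if dA then [(a, !oAB, sa), (b, !oAC, sb)] else [(b, !oAC, sb), (a, !oAB, sa)]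
     let PB : GWord :=
       if dB then [(a, oAB, sa), (c, !oBC, sc)] else [(c, !oBC, sc), (a, oAB, sa)]
     let PC : GWord :=
       if dC then [(b, oAC, sb), (c, oBC, sc)] else [(c, oBC, sc), (b, oAC, sb)]
     let Q1 : GWord := if swap then PC else PB
     let Q2 : GWord := if swap then PB else PC
     u = x ++ PA ++ y ++ Q1 ++ z ++ Q2 ++ t ∧
     v = x ++ PA.reverse ++ y ++ Q1.reverse ++ z ++ Q2.reverse ++ t)

/-- One welded Reidemeister move (C1, C2, C3 or W, in either direction),
performed up to cyclic permutation and renaming of chords. -/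
def WeldedStep (u v : GWord) : Prop :=
  ∃ u₀ v₀ : GWord, CyclicRename u u₀ ∧ CyclicRename v₀ v ∧
    (C1delRaw u₀ v₀ ∨ C1delRaw v₀ u₀ ∨ C2delRaw u₀ v₀ ∨ C2delRaw v₀ u₀ ∨
     C3Raw u₀ v₀ ∨ C3Raw v₀ u₀ ∨ WRaw u₀ v₀)

/-- Welded equivalence: two Gauss codes are welded-equivalent if they are
related by a finite sequence of C1, C2, C3 and W moves (on cyclic words). -/
def WeldedEquiv : GWord → GWord → Prop := Relation.EqvGen WeldedStep

/-- A Gauss code represents the trivial welded knot iff it is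
welded-equivalent to the empty code. -/
def RepresentsTrivial (w : GWord) : Prop := WeldedEquiv w []

/-- One C1 or W move (in either direction), up to cyclic permutation and
renaming of chords. -/
def CWStep (u v : GWord) : Prop :=
  ∃ u₀ v₀ : GWord, CyclicRename u u₀ ∧ CyclicRename v₀ v ∧
    (C1delRaw u₀ v₀ ∨ C1delRaw v₀ u₀ ∨ WRaw u₀ v₀)

/-- Relatedness by a finite sequence of C1 and W moves alone. -/
def CWEquiv : GWord → GWord → Prop := Relation.EqvGen CWStep

/-- One W move, up to cyclic permutation. -/
def WStepRot (u v : GWord) : Prop :=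
  ∃ u₀ v₀ : GWord, RotEq u u₀ ∧ RotEq v₀ v ∧ WRaw u₀ v₀

/-- One deleting C1 move, up to cyclic permutation. -/
def C1StepRot (u v : GWord) : Prop :=
  ∃ u₀ v₀ : GWord, RotEq u u₀ ∧ RotEq v₀ v ∧ C1delRaw u₀ v₀

/-- In the linear word `v`, no chord has its head occurring strictly before
its tail. -/
def TailsFirst (v : GWord) : Prop :=
  ¬ ∃ (x y z : GWord) (a : ℕ) (s s' : Bool),
      v = x ++ (a, true, s) :: (y ++ (a, false, s') :: z)

/-- A Gauss code is descending if the cyclic word can be cut at some point and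
read in one of the two directions so that every chord's tail occurs before its
head. -/
def IsDescending (w : GWord) : Prop :=
  ∃ n : ℕ, TailsFirst (w.rotate n) ∨ TailsFirst ((w.rotate n).reverse)

/-- `c(D)`: the minimal number of chords of a Gauss code representing the same
welded knot as `D`. -/
noncomputable def minCrossing (D : GWord) : ℕ :=
  sInf {n : ℕ | ∃ D' : GWord, IsGaussCode D' ∧ WeldedEquiv D D' ∧ (chordSet D').ncard = n}

/-- `u(D)`: the minimal cardinality of a set `S` of chords of `D` such that the
crossing change at `S` turns `D` into a Gauss code representing the trivial
welded knot. -/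
noncomputable def unknottingNumWord (D : GWord) : ℕ :=
  sInf {k : ℕ | ∃ S : Finset ℕ, ↑S ⊆ chordSet D ∧ S.card = k ∧
    WeldedEquiv (crossingChange S D) []}

/-- `u(K)`: the minimum of `u(D')` over all Gauss codes `D'` representing the
same welded knot as `D`. -/
noncomputable def unknottingNum (D : GWord) : ℕ :=
  sInf {k : ℕ | ∃ D' : GWord, IsGaussCode D' ∧ WeldedEquiv D D' ∧ unknottingNumWord D' = k}
/-! The at most four endpoints of a code with at most two chords can always be brought into
the pattern of two adjacent pairs: if the two chords interleave, their tails are cyclically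
adjacent and a W move untangles them. Two adjacent pairs then disappear by two C1 moves. -/

theorem List.exists_rotate_eq_cons {α : Type*} {l : List α} {x : α} (hx : x ∈ l) :
    ∃ n t, l.rotate n = x :: t := by
  obtain ⟨s, t, rfl⟩ := List.append_of_mem hx
  exact ⟨s.length, t ++ s, by simp [List.rotate_append_length_eq]⟩

theorem List.eq_of_length_eq_three {α : Type*} {l : List α} {x y z : α} (hl : l.length = 3)
    (hx : x ∈ l) (hy : y ∈ l) (hz : z ∈ l) (hxy : x ≠ y) (hxz : x ≠ z) (hyz : y ≠ z) :
    l = [x, y, z] ∨ l = [x, z, y] ∨ l = [y, x, z] ∨ l = [y, z, x] ∨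
      l = [z, x, y] ∨ l = [z, y, x] := by
  match l, hl with
  | [p, q, r], _ =>
    simp only [List.mem_cons, List.not_mem_nil, or_false] at hx hy hz
    rcases hx with rfl | rfl | rfl <;> rcases hy with rfl | rfl | rfl <;>
      rcases hz with rfl | rfl | rfl <;> simp_all

theorem chordSet_eq_coe_toFinset (w : GWord) :
    chordSet w = ↑(w.map Prod.fst).toFinset := by
  ext
  simp [chordSet]

theorem IsGaussCode.length_eq {w : GWord} (hw : IsGaussCode w) :
    w.length = 2 * (chordSet w).ncard := by
  rw [chordSet_eq_coe_toFinset, Set.ncard_coe_finset, ← List.length_map (f := Prod.fst),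
    ← List.sum_toFinset_count_eq_length, mul_comm, ← smul_eq_mul, ← Finset.sum_const]
  refine Finset.sum_congr rfl fun a ha => ?_
  have hcount := (hw a (by simpa [chordSet_eq_coe_toFinset] using ha)).1
  rwa [List.count_eq_countP, List.countP_map] at *

theorem exists_label_not_mem (w : GWord) : ∃ a : ℕ, ∀ e ∈ w, e.1 ≠ a := by
  obtain ⟨a, ha⟩ := Infinite.exists_notMem_finset (w.map Prod.fst).toFinset
  exact ⟨a, fun e he h => ha (List.mem_toFinset.mpr (List.mem_map.mpr ⟨e, he, h⟩))⟩

theorem CyclicRename.refl (w : GWord) : CyclicRename w w :=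
  ⟨0, id, Function.injective_id, by simp [relabelWord]⟩

namespace WeldedEquiv

theorem refl (w : GWord) : WeldedEquiv w w := Relation.EqvGen.refl w

theorem trans {u v w : GWord} (h : WeldedEquiv u v) (h' : WeldedEquiv v w) : WeldedEquiv u w :=
  Relation.EqvGen.trans u v w h h'

theorem of_step {u v : GWord} (h : WeldedStep u v) : WeldedEquiv u v :=
  Relation.EqvGen.rel u v h

theorem c1_delete {x y : GWord} {a : ℕ} (h s : Bool) (hxy : ∀ e ∈ x ++ y, e.1 ≠ a) :
    WeldedEquiv (x ++ (a, h, s) :: (a, !h, s) :: y) (x ++ y) :=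
  of_step ⟨_, _, CyclicRename.refl _, CyclicRename.refl _,
    Or.inl ⟨x, y, a, h, s, hxy, rfl, rfl⟩⟩

theorem swap_tails (x y : GWord) (a b : ℕ) (s t : Bool) :
    WeldedEquiv (x ++ (a, false, s) :: (b, false, t) :: y)
      (x ++ (b, false, t) :: (a, false, s) :: y) :=
  of_step ⟨_, _, CyclicRename.refl _, CyclicRename.refl _,
    Or.inr <| Or.inr <| Or.inr <| Or.inr <| Or.inr <| Or.inr ⟨x, y, a, b, s, t, rfl, rfl⟩⟩

/-- Insert a fresh chord by C1, then delete it again with the renaming applied on the output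
side of the move. -/
theorem of_cyclicRename {w w' : GWord} (h : CyclicRename w w') : WeldedEquiv w w' := by
  obtain ⟨a, ha⟩ := exists_label_not_mem w
  have ha' : ∀ e ∈ ([] : GWord) ++ w, e.1 ≠ a := by simpa using ha
  have hins : WeldedStep w ((a, false, true) :: (a, true, true) :: w) :=
    ⟨w, _, CyclicRename.refl w, CyclicRename.refl _,
      Or.inr <| Or.inl ⟨[], w, a, false, true, ha', rfl, rfl⟩⟩
  have hdel : WeldedStep ((a, false, true) :: (a, true, true) :: w) w' :=
    ⟨_, w, CyclicRename.refl _, h, Or.inl ⟨[], w, a, false, true, ha', rfl, rfl⟩⟩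
  exact (of_step hins).trans (of_step hdel)

theorem rotate (w : GWord) (n : ℕ) : WeldedEquiv w (w.rotate n) :=
  of_cyclicRename ⟨n, id, Function.injective_id, by simp [relabelWord]⟩

theorem two_adjacent_pairs {a b : ℕ} (hab : a ≠ b) (h s h' t : Bool) :
    WeldedEquiv [(a, h, s), (a, !h, s), (b, h', t), (b, !h', t)] [] :=
  (c1_delete (x := []) h s (by simp [hab.symm])).trans
    (c1_delete (x := []) (y := []) h' t (by simp))

end WeldedEquiv

open WeldedEquiv in
theorem weldedEquiv_nil_of_length_eq_two {w : GWord} {a : ℕ} {s : Bool}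
    (hT : (a, false, s) ∈ w) (hH : (a, true, s) ∈ w) (hlen : w.length = 2) :
    WeldedEquiv w [] := by
  obtain ⟨n, t, hn⟩ := List.exists_rotate_eq_cons hT
  have ht : t = [(a, true, s)] := by
    have hHt : (a, true, s) ∈ t := by
      simpa [hn] using (List.mem_rotate (n := n)).mpr hH
    have htlen : t.length = 1 := by simpa [hn, hlen] using (List.length_rotate w n).symm
    obtain ⟨e, rfl⟩ := List.length_eq_one_iff.mp htlen
    simp_all
  exact (hn ▸ rotate w n).trans (ht ▸ c1_delete (x := []) (y := []) false s (by simp))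

open WeldedEquiv in
theorem weldedEquiv_nil_of_length_eq_four {w : GWord} {a b : ℕ} {s t : Bool} (hab : a ≠ b)
    (hTa : (a, false, s) ∈ w) (hHa : (a, true, s) ∈ w)
    (hTb : (b, false, t) ∈ w) (hHb : (b, true, t) ∈ w) (hlen : w.length = 4) :
    WeldedEquiv w [] := by
  obtain ⟨n, l, hn⟩ := List.exists_rotate_eq_cons hTa
  have hmem : ∀ e ∈ w, e ≠ (a, false, s) → e ∈ l := fun e he hne => by
    simpa [hne, hn] using (List.mem_rotate (n := n)).mpr he
  have hl : l.length = 3 := by simpa [hn, hlen] using (List.length_rotate w n).symm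
  refine (hn ▸ rotate w n).trans ?_
  rcases List.eq_of_length_eq_three hl (hmem _ hHa (by simp)) (hmem _ hTb (by simp [hab.symm]))
    (hmem _ hHb (by simp [hab.symm])) (by simp [hab]) (by simp [hab]) (by simp) with
    rfl | rfl | rfl | rfl | rfl | rfl
  · exact two_adjacent_pairs hab false s false t
  · exact two_adjacent_pairs hab false s true t
  · exact (swap_tails [] _ a b s t).trans <|
      (rotate _ 3).trans (two_adjacent_pairs hab.symm true t false s)
  · exact (rotate _ 3).trans (two_adjacent_pairs hab true s false t)
  · exact (rotate _ 3).trans <| (swap_tails [] _ b a t s).trans <|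
      (rotate _ 3).trans (two_adjacent_pairs hab true s false t)
  · exact (rotate _ 3).trans (two_adjacent_pairs hab true s true t)

theorem IsGaussCode.weldedEquiv_nil_of_ncard_le_two {w : GWord} (hw : IsGaussCode w)
    (hcard : (chordSet w).ncard ≤ 2) : WeldedEquiv w [] := by
  have hlen := hw.length_eq
  obtain hn | hn | hn : (chordSet w).ncard = 0 ∨ (chordSet w).ncard = 1 ∨
      (chordSet w).ncard = 2 := by omega
  · rw [List.eq_nil_of_length_eq_zero (l := w) (by omega)]
    exact WeldedEquiv.refl []
  · obtain ⟨a, ha⟩ := Set.ncard_eq_one.mp hn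
    obtain ⟨-, s, hT, hH⟩ := hw a (by simp [ha])
    exact weldedEquiv_nil_of_length_eq_two hT hH (by omega)
  · obtain ⟨a, b, hab, hab'⟩ := Set.ncard_eq_two.mp hn
    obtain ⟨-, s, hTa, hHa⟩ := hw a (by simp [hab'])
    obtain ⟨-, t, hTb, hHb⟩ := hw b (by simp [hab'])
    exact weldedEquiv_nil_of_length_eq_four hab hTa hHa hTb hHb (by omega)

theorem nontrivial_crossing_number_ge_three_general (D : GWord)
    (hnt : ¬ WeldedEquiv D []) :
    (∀ D' : GWord, IsGaussCode D' → WeldedEquiv D D' → 3 ≤ (chordSet D').ncard) ∧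
    (∀ E : GWord, IsGaussCode E → (chordSet E).ncard ≤ 2 → WeldedEquiv E []) := by
  refine ⟨fun D' hD' hDD' => ?_, fun E hE hcard => hE.weldedEquiv_nil_of_ncard_le_two hcard⟩
  by_contra! hlt
  exact hnt (hDD'.trans (hD'.weldedEquiv_nil_of_ncard_le_two (by omega)))

/-- Every non-trivial welded knot `K` satisfies `c(K) ≥ 3`:
if a Gauss code `D` is not welded-equivalent to the empty code, then every
Gauss code welded-equivalent to `D` has at least three chords.  Equivalently,
every Gauss code with at most two chords represents the trivial welded knot. -/
theorem nontrivial_crossing_number_ge_three (D : GWord) (hD : IsGaussCode D)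
    (hnt : ¬ WeldedEquiv D []) :
    (∀ D' : GWord, IsGaussCode D' → WeldedEquiv D D' → 3 ≤ (chordSet D').ncard) ∧
    (∀ E : GWord, IsGaussCode E → (chordSet E).ncard ≤ 2 → WeldedEquiv E []) :=
  nontrivial_crossing_number_ge_three_general D hnt
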